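/- Let a(z) = √((−z⁴ + 16z²)/(8(z² + 2))) for z ∈ (2√2, 4). Then a is differentiable and satisfies a′(z)/a(z) = (z² − 4)(z² + 8)/(z(z² + 2)(z² − 16)), and the expression H(z) = z·(z·a′(z) − a(z))/√(z² − a(z)²) − 4a′(z)/√(4 − a(z)²) − 2a′(z)/√(1 − a(z)²) is identically zero. -/

import Mathlib

noncomputable def aFun (z : ℝ) : ℝ :=
  Real.sqrt ((-z ^ 4 + 16 * z ^ 2) / (8 * (z ^ 2 + 2)))

/-!
With `D = 8 (z² + 2)`, the three radicands `z² - a²`, `4 - a²`, `1 - a²` are the perfect squares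
`(3z²)² / D`, `(z² + 8)² / D`, `(z² - 4)² / D`, so every square root in `H` is rational in `z`
up to the common factor `√D`. Writing `a' = a r` with the logarithmic derivative
`r = (z² - 4)(z² + 8) / (z (z² + 2)(z² - 16))`, the expression `H` becomes `a √D` times a rational
function of `z`, and that rational function vanishes identically.
-/

open Real

section

variable {z : ℝ}

lemma aFun_radicand_pos (hz : z ≠ 0) (h16 : z ^ 2 < 16) :
    0 < (-z ^ 4 + 16 * z ^ 2) / (8 * (z ^ 2 + 2)) := by
  have : 0 < z ^ 2 := by positivity
  apply div_pos <;> nlinarith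

lemma aFun_sq (h16 : z ^ 2 ≤ 16) :
    aFun z ^ 2 = (-z ^ 4 + 16 * z ^ 2) / (8 * (z ^ 2 + 2)) :=
  sq_sqrt (div_nonneg (by nlinarith [sq_nonneg z]) (by positivity))

lemma aFun_sq_mul (h16 : z ^ 2 ≤ 16) :
    aFun z ^ 2 * (8 * (z ^ 2 + 2)) = -z ^ 4 + 16 * z ^ 2 := by
  rw [aFun_sq h16, div_mul_cancel₀ _ (by positivity)]

lemma aFun_pos (hz : z ≠ 0) (h16 : z ^ 2 < 16) : 0 < aFun z :=
  sqrt_pos.2 (aFun_radicand_pos hz h16)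

lemma hasDerivAt_aFun_radicand (z : ℝ) :
    HasDerivAt (fun z : ℝ => (-z ^ 4 + 16 * z ^ 2) / (8 * (z ^ 2 + 2)))
      (-z * (z ^ 2 - 4) * (z ^ 2 + 8) / (4 * (z ^ 2 + 2) ^ 2)) z := by
  have hnum : HasDerivAt (fun z : ℝ => -z ^ 4 + 16 * z ^ 2) (-(4 * z ^ 3) + 16 * (2 * z)) z :=
    ((hasDerivAt_pow 4 z).neg.add ((hasDerivAt_pow 2 z).const_mul 16)).congr_deriv (by ring)
  have hden : HasDerivAt (fun z : ℝ => 8 * (z ^ 2 + 2)) (8 * (2 * z)) z :=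
    (((hasDerivAt_pow 2 z).add_const 2).const_mul 8).congr_deriv (by ring)
  refine (hnum.div hden (by positivity)).congr_deriv ?_
  field_simp
  ring

lemma hasDerivAt_aFun (hz : z ≠ 0) (h16 : z ^ 2 < 16) :
    HasDerivAt aFun
      (aFun z * ((z ^ 2 - 4) * (z ^ 2 + 8) / (z * (z ^ 2 + 2) * (z ^ 2 - 16)))) z := by
  refine ((hasDerivAt_aFun_radicand z).sqrt (aFun_radicand_pos hz h16).ne').congr_deriv ?_
  change _ / (2 * aFun z) = _
  have := (aFun_pos hz h16).ne'
  have : z ^ 2 - 16 ≠ 0 := by linarith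
  field_simp
  linear_combination (4 - z ^ 2) * aFun_sq_mul h16.le

lemma sqrt_sub_aFun_sq {c p : ℝ} (h16 : z ^ 2 ≤ 16) (hp : 0 ≤ p)
    (h : c * (8 * (z ^ 2 + 2)) + z ^ 4 - 16 * z ^ 2 = p ^ 2) :
    √(c - aFun z ^ 2) = p / √(8 * (z ^ 2 + 2)) := by
  have hsq : c - aFun z ^ 2 = p ^ 2 / (8 * (z ^ 2 + 2)) := by
    rw [eq_div_iff (by positivity)]
    linear_combination h - aFun_sq_mul h16
  rw [hsq, sqrt_div (sq_nonneg p), sqrt_sq hp]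

lemma aFun_H_eq_zero (h4 : 4 < z ^ 2) (h16 : z ^ 2 < 16) :
    z * (z * deriv aFun z - aFun z) / √(z ^ 2 - aFun z ^ 2) -
      4 * deriv aFun z / √(4 - aFun z ^ 2) - 2 * deriv aFun z / √(1 - aFun z ^ 2) = 0 := by
  have hz : z ≠ 0 := by rintro rfl; norm_num at h4
  rw [(hasDerivAt_aFun hz h16).deriv,
    sqrt_sub_aFun_sq (p := 3 * z ^ 2) h16.le (by positivity) (by ring),
    sqrt_sub_aFun_sq (p := z ^ 2 + 8) h16.le (by positivity) (by ring),
    sqrt_sub_aFun_sq (p := z ^ 2 - 4) h16.le (by linarith) (by ring)]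
  have : z ^ 2 - 4 ≠ 0 := by linarith
  have : z ^ 2 - 16 ≠ 0 := by linarith
  have : √(8 * (z ^ 2 + 2)) ≠ 0 := by positivity
  field_simp
  ring

end

theorem stmt14 :
    ∀ z ∈ Set.Ioo (2 * Real.sqrt 2) 4,
      DifferentiableAt ℝ aFun z ∧
      deriv aFun z / aFun z =
        (z ^ 2 - 4) * (z ^ 2 + 8) / (z * (z ^ 2 + 2) * (z ^ 2 - 16)) ∧
      z * (z * deriv aFun z - aFun z) / Real.sqrt (z ^ 2 - aFun z ^ 2) -
        4 * deriv aFun z / Real.sqrt (4 - aFun z ^ 2) -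
        2 * deriv aFun z / Real.sqrt (1 - aFun z ^ 2) = 0 := by
  rintro z ⟨hlo, hhi⟩
  have h2 : 2 < z := lt_trans (by linarith [one_lt_sqrt_two]) hlo
  have h4 : 4 < z ^ 2 := by nlinarith
  have h16 : z ^ 2 < 16 := by nlinarith
  have hz : z ≠ 0 := by positivity
  have hderiv := hasDerivAt_aFun hz h16
  refine ⟨hderiv.differentiableAt, ?_, aFun_H_eq_zero h4 h16⟩
  rw [hderiv.deriv, mul_div_cancel_left₀ _ (aFun_pos hz h16).ne']
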